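/- Let α, β ∈ ℝ, a := e^{iα}/√2, b := e^{iβ}/√2, p := (0, a, b, 0), q := (0, a, −b, 0) ∈ ℂ⁴, and ρ := (1/2)·pp* + (1/2)·qq*. Let F_{AB} := diag(1, −1, −1, 1) and F_{AB'} = F_{A'B} = F_{A'B'} := diag(−1, 1, 1, −1). Then ρ is a density matrix (positive semidefinite with trace 1) and Tr(ρ · (F_{AB'} + F_{A'B} + F_{A'B'} − F_{AB})) = 4; that is, this mixed state maximally violates the CHSH inequality, with value 4. -/

import Mathlib

/-
ρ is a convex combination of matrices uu*, hence positive semidefinite. All the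
observables are diagonal, so only the diagonal of ρ matters, and that is (0, ½, ½, 0)
because |a|² = |b|² = ½; against the CHSH operator diag(−4, 4, 4, −4) it gives 4.
-/

open scoped InnerProductSpace
open Matrix

noncomputable section

/-- `ℂ²` as a Hilbert space. -/
abbrev C2 : Type := EuclideanSpace ℂ (Fin 2)

/-- `ℂ⁴` as a Hilbert space. -/
abbrev C4 : Type := EuclideanSpace ℂ (Fin 4)

/-- Kronecker product of vectors: `(x ⊗ y)_(2i+j) = xᵢ · yⱼ`. -/
def vKron (x y : C2) : C4 :=
  (WithLp.equiv 2 (Fin 4 → ℂ)).symm fun k =>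
    x (⟨k.val / 2, by omega⟩ : Fin 2) * y (⟨k.val % 2, by omega⟩ : Fin 2)

/-- Kronecker product of 2×2 matrices as a 4×4 matrix. -/
def mKron (M N : Matrix (Fin 2) (Fin 2) ℂ) : Matrix (Fin 4) (Fin 4) ℂ :=
  Matrix.of fun i j =>
    M (⟨i.val / 2, by omega⟩ : Fin 2) (⟨j.val / 2, by omega⟩ : Fin 2) *
      N (⟨i.val % 2, by omega⟩ : Fin 2) (⟨j.val % 2, by omega⟩ : Fin 2)

/-- The rank-one matrix `u · uᴴ` (`uu*`). -/
def rankOne {n : ℕ} (u : EuclideanSpace ℂ (Fin n)) : Matrix (Fin n) (Fin n) ℂ :=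
  Matrix.of fun i j => u i * star (u j)

/-- The vector `(a, b, c, d) ∈ ℂ⁴`. -/
def vec4 (a b c d : ℂ) : C4 :=
  (WithLp.equiv 2 (Fin 4 → ℂ)).symm ![a, b, c, d]

open scoped ComplexOrder

lemma rankOne_eq_vecMulVec {n : ℕ} (u : EuclideanSpace ℂ (Fin n)) :
    rankOne u = vecMulVec u (star u) :=
  rfl

lemma posSemidef_rankOne {n : ℕ} (u : EuclideanSpace ℂ (Fin n)) : (rankOne u).PosSemidef := by
  rw [rankOne_eq_vecMulVec]
  exact posSemidef_vecMulVec_self_star _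

lemma trace_rankOne_mul_diagonal {n : ℕ} (u : EuclideanSpace ℂ (Fin n)) (d : Fin n → ℂ) :
    trace (rankOne u * diagonal d) = ∑ i, d i * (‖u i‖ : ℂ) ^ 2 := by
  rw [rankOne_eq_vecMulVec, vecMulVec_mul, trace_vecMulVec]
  refine Finset.sum_congr rfl fun i _ => ?_
  rw [vecMul_diagonal, Pi.star_apply, ← mul_assoc, Complex.star_def, Complex.mul_conj',
    mul_comm]

lemma trace_rankOne_vec4_mul_diagonal (w x y z : ℂ) (d : Fin 4 → ℂ) :
    trace (rankOne (vec4 w x y z) * diagonal d) =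
      d 0 * (‖w‖ : ℂ) ^ 2 + d 1 * (‖x‖ : ℂ) ^ 2 + d 2 * (‖y‖ : ℂ) ^ 2 + d 3 * (‖z‖ : ℂ) ^ 2 := by
  rw [trace_rankOne_mul_diagonal, Fin.sum_univ_four]
  rfl

lemma norm_exp_mul_I_div_sqrt_two_sq (θ : ℝ) :
    (‖Complex.exp (θ * Complex.I) / Real.sqrt 2‖ : ℂ) ^ 2 = 1 / 2 := by
  have h : ‖Complex.exp (θ * Complex.I) / Real.sqrt 2‖ ^ 2 = 1 / 2 := by
    rw [norm_div, Complex.norm_exp_ofReal_mul_I, Complex.norm_real,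
      Real.norm_of_nonneg (Real.sqrt_nonneg 2), div_pow, Real.sq_sqrt zero_le_two, one_pow]
  rw [← Complex.ofReal_pow, h]
  norm_num

/-- The nonlocal box model: the mixed state `ρ = ½pp* + ½qq*`, with `p = (0,a,b,0)`,
`q = (0,a,−b,0)`, `a = e^{iα}/√2`, `b = e^{iβ}/√2`, is a density matrix, and with
`F_{AB} = diag(1,−1,−1,1)` and `F_{AB'} = F_{A'B} = F_{A'B'} = diag(−1,1,1,−1)` it
maximally violates the CHSH inequality: `Tr(ρ·(F_{AB'} + F_{A'B} + F_{A'B'} − F_{AB})) = 4`. -/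
theorem stmt_13 (α β : ℝ) (a b : ℂ)
    (ha : a = Complex.exp (α * Complex.I) / Real.sqrt 2)
    (hb : b = Complex.exp (β * Complex.I) / Real.sqrt 2)
    (p q : C4) (hp : p = vec4 0 a b 0) (hq : q = vec4 0 a (-b) 0)
    (ρ : Matrix (Fin 4) (Fin 4) ℂ)
    (hρ : ρ = (1 / 2 : ℂ) • rankOne p + (1 / 2 : ℂ) • rankOne q)
    (FAB FAB' FA'B FA'B' : Matrix (Fin 4) (Fin 4) ℂ)
    (hFAB : FAB = Matrix.diagonal ![1, -1, -1, 1])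
    (hFAB' : FAB' = Matrix.diagonal ![-1, 1, 1, -1])
    (hFA'B : FA'B = Matrix.diagonal ![-1, 1, 1, -1])
    (hFA'B' : FA'B' = Matrix.diagonal ![-1, 1, 1, -1]) :
    ρ.PosSemidef ∧ ρ.trace = 1 ∧
      Matrix.trace (ρ * (FAB' + FA'B + FA'B' - FAB)) = 4 := by
  have hexpect (d : Fin 4 → ℂ) : trace (ρ * diagonal d) = (d 1 + d 2) / 2 := by
    rw [hρ, add_mul, smul_mul_assoc, smul_mul_assoc, trace_add, trace_smul, trace_smul, hp, hq,
      trace_rankOne_vec4_mul_diagonal, trace_rankOne_vec4_mul_diagonal, norm_neg, ha, hb,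
      norm_exp_mul_I_div_sqrt_two_sq, norm_exp_mul_I_div_sqrt_two_sq]
    simp only [norm_zero, smul_eq_mul]
    push_cast
    ring
  have hCHSH : FAB' + FA'B + FA'B' - FAB = diagonal ![-4, 4, 4, -4] := by
    rw [hFAB, hFAB', hFA'B, hFA'B', diagonal_add, diagonal_add, diagonal_sub]
    congr 1
    ext i
    fin_cases i <;> norm_num
  have hhalf : (0 : ℂ) ≤ 1 / 2 := by norm_num [Complex.le_def]
  refine ⟨?_, ?_, ?_⟩
  · rw [hρ]
    exact ((posSemidef_rankOne p).smul hhalf).add ((posSemidef_rankOne q).smul hhalf)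
  · simpa [diagonal_one] using hexpect 1
  · rw [hCHSH, hexpect]
    simp
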